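/- arXiv:2312.17022 — 2 statements merged into one kernel-verified Lean document; each statement's English description precedes it below -/
import Mathlib

section
/- (Kelly's Lemma, rooted version) Suppose G and H are graphs on n vertices and σ : V(G) → V(H) is a hypomorphism (G − v ≅ H − σ(v) for all v). Then for every graph F with v(F) < n and every v ∈ V(G), s(F, G^v) = s(F, H^{σ(v)}). -/
open SimpleGraph Finset

/-- `s(F,G)`: the number of subgraphs of `G` isomorphic to `F`. -/
noncomputable def subCount {W V : Type*} (F : SimpleGraph W) (G : SimpleGraph V) : ℕ :=
  Nat.card {H : G.Subgraph // Nonempty (H.coe ≃g F)}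

/-- `i(F,G)`: the number of induced subgraphs of `G` isomorphic to `F`. -/
noncomputable def indCount {W V : Type*} (F : SimpleGraph W) (G : SimpleGraph V) : ℕ :=
  Nat.card {H : G.Subgraph // H.IsInduced ∧ Nonempty (H.coe ≃g F)}

/-- `s(F,G^v)`: subgraphs of `G` isomorphic to `F` that contain `v`. -/
noncomputable def subCountAt {W V : Type*} (F : SimpleGraph W) (G : SimpleGraph V) (v : V) : ℕ :=
  Nat.card {H : G.Subgraph // v ∈ H.verts ∧ Nonempty (H.coe ≃g F)}

/-- `i(F,G^v)`: induced subgraphs of `G` isomorphic to `F` that contain `v`. -/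
noncomputable def indCountAt {W V : Type*} (F : SimpleGraph W) (G : SimpleGraph V) (v : V) : ℕ :=
  Nat.card {H : G.Subgraph // H.IsInduced ∧ v ∈ H.verts ∧ Nonempty (H.coe ≃g F)}

/-- `s(F^x,G^v)`: subgraphs `H` of `G` containing `v` with a rooted isomorphism
`H^v ≅ F^x` (an isomorphism `H ≃g F` sending `v` to `x`). -/
noncomputable def rootedCountAt {W V : Type*} (F : SimpleGraph W) (x : W)
    (G : SimpleGraph V) (v : V) : ℕ :=
  Nat.card {H : G.Subgraph // ∃ hv : v ∈ H.verts, ∃ e : H.coe ≃g F, e ⟨v, hv⟩ = x}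

/-- `i(F^x,G^v)`: induced subgraphs `H` of `G` containing `v` with `H^v ≅ F^x`. -/
noncomputable def indRootedCountAt {W V : Type*} (F : SimpleGraph W) (x : W)
    (G : SimpleGraph V) (v : V) : ℕ :=
  Nat.card {H : G.Subgraph //
    H.IsInduced ∧ ∃ hv : v ∈ H.verts, ∃ e : H.coe ≃g F, e ⟨v, hv⟩ = x}

/-- `s(F^x,G)`: rooted-subgraph occurrences of `F^x` in `G`, root anywhere:
pairs `(H, w)` with `H` a subgraph of `G`, `w ∈ V(H)` and `H^w ≅ F^x`. -/
noncomputable def rootedCount {W V : Type*} (F : SimpleGraph W) (x : W)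
    (G : SimpleGraph V) : ℕ :=
  Nat.card {p : G.Subgraph × V //
    ∃ hv : p.2 ∈ p.1.verts, ∃ e : p.1.coe ≃g F, e ⟨p.2, hv⟩ = x}

/-- The vertex-deleted subgraph `G - v`. -/
def deleteVert {V : Type*} (G : SimpleGraph V) (v : V) :
    SimpleGraph {w : V // w ∈ ({w | w ≠ v} : Set V)} :=
  G.induce {w | w ≠ v}

/-- The radius of `G`, valued in `ℕ∞` (infinite if `G` is disconnected). -/
noncomputable def eradius {V : Type*} (G : SimpleGraph V) : ℕ∞ :=
  ⨅ v, ⨆ w, G.edist v w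

/-- Isomorphism of rooted graphs. -/
def RootedIso {α β : Type*} (A : SimpleGraph α) (a : α) (B : SimpleGraph β) (b : β) : Prop :=
  ∃ e : A ≃g B, e a = b

/-! Every copy of `F` in `G` avoids exactly `n - v(F)` vertices, so double counting gives
`∑ v, s(F, G - v) = (n - v(F)) · s(F, G)`. A hypomorphism makes the left-hand sides for `G`
and `H` agree term by term, hence `s(F, G) = s(F, H)` once `v(F) < n`; subtracting
`s(F, G - v) = s(F, H - σ v)` then gives the rooted counts. -/

namespace SimpleGraph

variable {U V W : Type*} {A : SimpleGraph U} {B : SimpleGraph V}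

def Embedding.subgraphEquiv (f : A ↪g B) :
    A.Subgraph ≃ {K : B.Subgraph // K.verts ⊆ Set.range f} where
  toFun K := ⟨K.map f.toHom, Set.image_subset_range _ _⟩
  invFun K := K.1.comap f.toHom
  left_inv K := by
    ext a b
    · simp [f.injective.mem_set_image]
    · simp only [Subgraph.comap_adj, Subgraph.map_adj, Relation.map_apply, Embedding.coe_toHom,
        f.injective.eq_iff, exists_eq_right_right, exists_eq_right, and_iff_right_iff_imp]
      exact fun h => K.adj_sub h
  right_inv K := by
    obtain ⟨K, hK⟩ := K
    ext x y
    · simp [Set.image_preimage_eq_of_subset hK]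
    · simp only [Subgraph.map_adj, Subgraph.comap_adj, Relation.Map]
      constructor
      · rintro ⟨a, b, ⟨-, h⟩, rfl, rfl⟩
        exact h
      · intro h
        obtain ⟨a, rfl⟩ := hK (K.edge_vert h)
        obtain ⟨b, rfl⟩ := hK (K.edge_vert h.symm)
        exact ⟨a, b, ⟨f.map_adj_iff.mp (K.adj_sub h), h⟩, rfl, rfl⟩

end SimpleGraph

section Transport

variable {U V W : Type*} {A : SimpleGraph U} {B : SimpleGraph V} (F : SimpleGraph W)

theorem subCount_eq_of_embedding (f : A ↪g B) :
    subCount F A =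
      Nat.card {K : B.Subgraph // K.verts ⊆ Set.range f ∧ Nonempty (K.coe ≃g F)} :=
  Nat.card_congr <|
    (f.subgraphEquiv.subtypeEquiv fun K =>
      let i := f.toCopy.isoSubgraphMap K
      ⟨fun ⟨j⟩ => ⟨i.symm.trans j⟩, fun ⟨j⟩ => ⟨i.trans j⟩⟩).trans
    (Equiv.subtypeSubtypeEquivSubtypeInter _ _)

theorem subCount_congr (e : A ≃g B) : subCount F A = subCount F B := by
  have hrange : Set.range e.toEmbedding = Set.univ := e.surjective.range_eq
  rw [subCount_eq_of_embedding F e.toEmbedding, hrange]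
  simp [subCount]

theorem subCount_induce (G : SimpleGraph V) (s : Set V) :
    subCount F (G.induce s) =
      Nat.card {K : G.Subgraph // K.verts ⊆ s ∧ Nonempty (K.coe ≃g F)} := by
  have hrange : Set.range (Embedding.induce (G := G) s) = s := Subtype.range_coe
  rw [subCount_eq_of_embedding F (Embedding.induce s), hrange]

end Transport

section Counting

variable {V W : Type*} [Fintype V] (F : SimpleGraph W) (G : SimpleGraph V)

open Classical in
noncomputable def subgraphCopies : Finset G.Subgraph := {K | Nonempty (K.coe ≃g F)}

open Classical in
theorem subCount_eq_card_subgraphCopies : subCount F G = #(subgraphCopies F G) :=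
  Nat.subtype_card _ (by simp [subgraphCopies])

open Classical in
theorem subCountAt_eq_card_filter_mem (v : V) :
    subCountAt F G v = #{K ∈ subgraphCopies F G | v ∈ K.verts} :=
  Nat.subtype_card _ (by simp [subgraphCopies, and_comm])

open Classical in
theorem subCount_deleteVert_eq_card_filter_notMem (v : V) :
    subCount F (deleteVert G v) = #{K ∈ subgraphCopies F G | v ∉ K.verts} := by
  rw [deleteVert, subCount_induce, ← Set.compl_singleton_eq]
  exact Nat.subtype_card _ (by simp [subgraphCopies, Set.subset_compl_singleton_iff, and_comm])

theorem subCount_eq_subCountAt_add_subCount_deleteVert (v : V) :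
    subCount F G = subCountAt F G v + subCount F (deleteVert G v) := by
  classical
  rw [subCount_eq_card_subgraphCopies, subCountAt_eq_card_filter_mem,
    subCount_deleteVert_eq_card_filter_notMem, card_filter_add_card_filter_not]

open Classical in
theorem card_filter_notMem_verts (K : G.Subgraph) :
    #{v | v ∉ K.verts} = Fintype.card V - Nat.card K.verts := by
  have hsplit := card_filter_add_card_filter_not (s := univ) (· ∈ K.verts)
  have hverts : #{v | v ∈ K.verts} = Nat.card K.verts := (Nat.subtype_card _ (by simp)).symm
  rw [card_univ] at hsplit
  omega

theorem sum_subCount_deleteVert [Fintype W] :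
    ∑ v, subCount F (deleteVert G v) = (Fintype.card V - Fintype.card W) * subCount F G := by
  classical
  simp_rw [subCount_deleteVert_eq_card_filter_notMem, subCount_eq_card_subgraphCopies]
  calc ∑ v, #{K ∈ subgraphCopies F G | v ∉ K.verts}
      = ∑ K ∈ subgraphCopies F G, #{v | v ∉ K.verts} :=
        sum_card_bipartiteAbove_eq_sum_card_bipartiteBelow (fun v (K : G.Subgraph) => v ∉ K.verts)
    _ = ∑ K ∈ subgraphCopies F G, (Fintype.card V - Fintype.card W) := by
        refine sum_congr rfl fun K hK => ?_
        obtain ⟨e⟩ := (mem_filter.mp hK).2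
        rw [card_filter_notMem_verts, Nat.card_congr e.toEquiv, Nat.card_eq_fintype_card]
    _ = (Fintype.card V - Fintype.card W) * #(subgraphCopies F G) := by
        rw [sum_const, smul_eq_mul, mul_comm]

end Counting

theorem subCount_eq_of_hypomorphic {V V' W : Type*} [Fintype V] [Fintype V'] [Fintype W]
    {G : SimpleGraph V} {H : SimpleGraph V'} (σ : V ≃ V')
    (hdeck : ∀ v, Nonempty (deleteVert G v ≃g deleteVert H (σ v)))
    (F : SimpleGraph W) (hF : Fintype.card W < Fintype.card V) :
    subCount F G = subCount F H := by
  have hdecks : ∑ v, subCount F (deleteVert G v) = ∑ v', subCount F (deleteVert H v') := by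
    rw [← σ.sum_comp]
    exact sum_congr rfl fun v _ => subCount_congr F (hdeck v).some
  rw [sum_subCount_deleteVert, sum_subCount_deleteVert, ← Fintype.card_congr σ] at hdecks
  exact Nat.eq_of_mul_eq_mul_left (Nat.sub_pos_of_lt hF) hdecks

/-- Kelly's Lemma, rooted version: for a hypomorphism `σ`,
`s(F, G^v) = s(F, H^{σ(v)})`. -/
theorem stmt7 {V V' W : Type*} [Fintype V] [Fintype V'] [Fintype W]
    (G : SimpleGraph V) (H : SimpleGraph V') (sigma : V ≃ V')
    (hdeck : ∀ v : V, Nonempty (deleteVert G v ≃g deleteVert H (sigma v)))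
    (F : SimpleGraph W) (hF : Fintype.card W < Fintype.card V) (v : V) :
    subCountAt F G v = subCountAt F H (sigma v) := by
  have hG := subCount_eq_subCountAt_add_subCount_deleteVert F G v
  have hH := subCount_eq_subCountAt_add_subCount_deleteVert F H (sigma v)
  have hcards := subCount_eq_of_hypomorphic sigma hdeck F hF
  have hdeck_v := subCount_congr F (hdeck v).some
  omega
end

section
/- If G is a connected graph that is not a tree, then r(G) = min over e ∈ E(G) of r(G − e). -/
open SimpleGraph Finset

/-!
Let `c` be a centre of `G`. Choosing for every vertex `w ≠ c` a neighbour one step closer to `c`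
gives at most `|V| - 1` edges, and a connected graph that is not a tree has at least `|V|` edges.
So some edge `e` is not among them; every vertex still reaches `c` along the chosen edges in
`G - e`, hence distances from `c` do not change, `r(G - e) ≤ ecc(c) = r(G)`. Deleting edges
never decreases the radius, which gives the other inequality.
-/

namespace SimpleGraph

variable {V : Type*} {G H : SimpleGraph V}

lemma eccent_anti (h : H ≤ G) (u : V) : G.eccent u ≤ H.eccent u :=
  iSup_mono fun _ => edist_anti h

lemma radius_anti (h : H ≤ G) : G.radius ≤ H.radius :=
  iInf_mono (eccent_anti h)

lemma Reachable.exists_adj_edist_add_one_eq {u v : V} (hr : G.Reachable u v) (hne : u ≠ v) :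
    ∃ w, G.Adj w v ∧ G.edist u w + 1 = G.edist u v := by
  obtain ⟨P, hP⟩ := hr.exists_walk_length_eq_edist
  have hPnil : ¬P.Nil := Walk.not_nil_of_ne hne
  have hadj := P.adj_penultimate hPnil
  have hlen : P.dropLast.length + 1 = P.length := by
    rw [← Walk.length_concat _ hadj, Walk.concat_dropLast]
  refine ⟨P.penultimate, hadj, le_antisymm ?_ ?_⟩
  · calc G.edist u P.penultimate + 1 ≤ P.dropLast.length + 1 := by
          gcongr
          exact P.dropLast.edist_le
      _ = G.edist u v := by rw [← hP, ← hlen]; push_cast; rfl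
  · calc G.edist u v ≤ G.edist u P.penultimate + G.edist P.penultimate v := G.edist_triangle
      _ = G.edist u P.penultimate + 1 := by rw [edist_eq_one_iff_adj.mpr hadj]

lemma edist_le_of_forall_exists_adj {c : V}
    (h : ∀ w ≠ c, ∃ p, H.Adj p w ∧ G.edist c p + 1 = G.edist c w) (w : V) :
    H.edist c w ≤ G.edist c w := by
  suffices key : ∀ n : ℕ, ∀ w, G.edist c w = n → H.edist c w ≤ n by
    cases hw : G.edist c w with
    | top => exact le_top
    | coe n => exact key n w hw
  intro n
  induction n with
  | zero =>
    intro w hw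
    rw [Nat.cast_zero, edist_eq_zero_iff] at hw
    simp [hw]
  | succ n ih =>
    intro w hw
    have hwc : w ≠ c := by
      rintro rfl
      exact Nat.cast_add_one_ne_zero n (hw ▸ edist_self)
    obtain ⟨p, hadj, hp⟩ := h w hwc
    have hpn : G.edist c p = n := by
      rw [hw, Nat.cast_add, Nat.cast_one] at hp
      exact WithTop.add_right_cancel ENat.one_ne_top hp
    calc H.edist c w ≤ H.edist c p + H.edist p w := H.edist_triangle
      _ ≤ n + 1 := add_le_add (ih p hpn) (edist_eq_one_iff_adj.mpr hadj).le
      _ = (n + 1 : ℕ) := by push_cast; rfl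

lemma Connected.card_le_card_edgeSet_of_not_isTree [Finite V] (hG : G.Connected)
    (hnt : ¬G.IsTree) : Nat.card V ≤ Nat.card G.edgeSet := by
  have hcard := hG.card_vert_le_card_edgeSet_add_one
  have hne : Nat.card G.edgeSet + 1 ≠ Nat.card V := fun h =>
    hnt (isTree_iff_connected_and_card.mpr ⟨hG, h⟩)
  omega

lemma Connected.exists_edist_deleteEdges_eq [Finite V] (hG : G.Connected) (hnt : ¬G.IsTree)
    (c : V) : ∃ e ∈ G.edgeSet, ∀ w, (G.deleteEdges {e}).edist c w = G.edist c w := by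
  choose parent hparent using fun (w : {w // w ≠ c}) =>
    (hG c w).exists_adj_edist_add_one_eq (Ne.symm w.2)
  let parentEdge (w : {w // w ≠ c}) : G.edgeSet := ⟨s(parent w, w), (hparent w).1⟩
  have hnsurj : ¬Function.Surjective parentEdge := fun hsurj =>
    ((Nat.card_le_card_of_surjective _ hsurj).trans_lt
      (Finite.card_subtype_lt (not_not.mpr rfl))).not_ge
      (hG.card_le_card_edgeSet_of_not_isTree hnt)
  obtain ⟨⟨e, he⟩, hnotParent⟩ := not_forall.mp hnsurj
  refine ⟨e, he, fun w => le_antisymm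
    (edist_le_of_forall_exists_adj (fun w hw => ⟨parent ⟨w, hw⟩, ?_, (hparent ⟨w, hw⟩).2⟩) w)
    (edist_anti (G.deleteEdges_le _))⟩
  refine deleteEdges_adj.mpr ⟨(hparent ⟨w, hw⟩).1, fun hmem => hnotParent ⟨⟨w, hw⟩, ?_⟩⟩
  exact Subtype.ext (Set.mem_singleton_iff.mp hmem)

end SimpleGraph

/-- for a connected non-tree `G`,
`r(G) = min_{e ∈ E(G)} r(G - e)` (radius valued in `ℕ∞`). -/
theorem stmt11 {V : Type*} [Fintype V] (G : SimpleGraph V) (hG : G.Connected)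
    (hnt : ¬ G.IsTree) :
    eradius G = ⨅ e : G.edgeSet, eradius (G.deleteEdges {(e : Sym2 V)}) := by
  change G.radius = ⨅ e : G.edgeSet, (G.deleteEdges {(e : Sym2 V)}).radius
  have := hG.nonempty
  obtain ⟨c, hc⟩ := G.exists_eccent_eq_radius
  obtain ⟨e, he, hdist⟩ := hG.exists_edist_deleteEdges_eq hnt c
  refine le_antisymm (le_iInf fun _ => radius_anti (G.deleteEdges_le _)) ?_
  calc ⨅ e : G.edgeSet, (G.deleteEdges {(e : Sym2 V)}).radius
      ≤ (G.deleteEdges {e}).radius := iInf_le (fun e : G.edgeSet => _) ⟨e, he⟩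
    _ ≤ (G.deleteEdges {e}).eccent c := radius_le_eccent
    _ = G.eccent c := by simp only [eccent_def, hdist]
    _ = G.radius := hc
end
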